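/- Let E be a connected directed graph and K a field. If the center Z(KE) of the path algebra KE is nonzero, then the set of vertices E^0 is finite. -/
import Mathlib

/-! Basic infrastructure: directed graphs and their path algebras.

The path algebra `KE` is realized as the non-unital subalgebra generated by the
(images of the) vertices and edges inside the unital algebra `PA K E`, which is the
quotient of the free algebra on vertices and edges by the usual path-algebra
relations (vertices are orthogonal idempotents acting as local units on edges).
Words of composable edges are exactly the paths, so `KE` has the paths as a basis. -/

/-- A directed graph `E = (E⁰, E¹, s, r)`. -/
structure DirGraph : Type 1 where
  V : Type
  Edge : Type
  s : Edge → V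
  r : Edge → V

/-- A (non-unital, possibly non-closed) subset `S` of an algebra is *prime* if it is nonzero
and `a S b = 0` implies `a = 0` or `b = 0` for `a, b ∈ S`. -/
def IsPrimeSet {A : Type} [NonUnitalNonAssocSemiring A] (S : Set A) : Prop :=
  (∃ a ∈ S, a ≠ 0) ∧ ∀ a ∈ S, ∀ b ∈ S, (∀ x ∈ S, a * x * b = 0) → a = 0 ∨ b = 0

/-- `J` is a two-sided ideal of the (possibly non-unital) subalgebra with carrier `S`. -/
def IsIdealOf (K : Type) [Field K] {A : Type} [Ring A] [Algebra K A] (S J : Set A) : Prop :=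
  J ⊆ S ∧ (0 : A) ∈ J ∧ (∀ x ∈ J, ∀ y ∈ J, x + y ∈ J) ∧
    (∀ k : K, ∀ x ∈ J, k • x ∈ J) ∧ (∀ a ∈ S, ∀ x ∈ J, a * x ∈ J ∧ x * a ∈ J)

namespace DirGraph

/-- Generators of the path algebra: vertices and edges. -/
abbrev Gen (E : DirGraph) : Type := E.V ⊕ E.Edge

variable (K : Type) [Field K] (E : DirGraph)

/-- The defining relations of the path algebra: vertices are orthogonal idempotents,
`s(e)·e = e`, `e·r(e) = e`, and all other vertex-edge products vanish. -/
inductive PathRel : FreeAlgebra K E.Gen → FreeAlgebra K E.Gen → Prop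
  | vv_eq (u : E.V) :
      PathRel (FreeAlgebra.ι K (Sum.inl u) * FreeAlgebra.ι K (Sum.inl u))
        (FreeAlgebra.ι K (Sum.inl u))
  | vv_ne (u v : E.V) : u ≠ v →
      PathRel (FreeAlgebra.ι K (Sum.inl u) * FreeAlgebra.ι K (Sum.inl v)) 0
  | ve_eq (e : E.Edge) :
      PathRel (FreeAlgebra.ι K (Sum.inl (E.s e)) * FreeAlgebra.ι K (Sum.inr e))
        (FreeAlgebra.ι K (Sum.inr e))
  | ve_ne (u : E.V) (e : E.Edge) : E.s e ≠ u →
      PathRel (FreeAlgebra.ι K (Sum.inl u) * FreeAlgebra.ι K (Sum.inr e)) 0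
  | ev_eq (e : E.Edge) :
      PathRel (FreeAlgebra.ι K (Sum.inr e) * FreeAlgebra.ι K (Sum.inl (E.r e)))
        (FreeAlgebra.ι K (Sum.inr e))
  | ev_ne (e : E.Edge) (u : E.V) : E.r e ≠ u →
      PathRel (FreeAlgebra.ι K (Sum.inr e) * FreeAlgebra.ι K (Sum.inl u)) 0

/-- The ambient unital algebra (the unitalization of the path algebra). -/
abbrev PA : Type := RingQuot (E.PathRel K)

/-- The image of a vertex in the path algebra. -/
noncomputable def vtx (u : E.V) : E.PA K :=
  RingQuot.mkAlgHom K (E.PathRel K) (FreeAlgebra.ι K (Sum.inl u))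

/-- The image of an edge in the path algebra. -/
noncomputable def edg (e : E.Edge) : E.PA K :=
  RingQuot.mkAlgHom K (E.PathRel K) (FreeAlgebra.ι K (Sum.inr e))

/-- The path algebra `KE`: the (non-unital) subalgebra spanned by all paths, i.e.
generated by the vertices and edges. -/
noncomputable def KE : NonUnitalSubalgebra K (E.PA K) :=
  NonUnitalAlgebra.adjoin K (Set.range (E.vtx K) ∪ Set.range (E.edg K))

/-- The center `Z(KE)` of the path algebra. -/
def relCenter : Set (E.PA K) :=
  {z | z ∈ E.KE K ∧ ∀ a ∈ E.KE K, a * z = z * a}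

/-- `E.IsPathFrom u v l` : the list of edges `l` is a path from `u` to `v`
(`l = []` is the trivial path at `u = v`). -/
def IsPathFrom : E.V → E.V → List E.Edge → Prop
  | u, v, [] => u = v
  | u, v, e :: l => E.s e = u ∧ IsPathFrom (E.r e) v l

/-- The element of the path algebra corresponding to the path starting at `u`
with list of edges `l` (for `l = []` this is the vertex `u` itself). -/
noncomputable def pathElem (u : E.V) (l : List E.Edge) : E.PA K :=
  E.vtx K u * (l.map (E.edg K)).prod

/-- The sum of all vertices: the unit of `KE` when `E⁰` is finite. -/
noncomputable def unitKE : E.PA K := ∑ᶠ u : E.V, E.vtx K u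

/-- The scalar multiples `K·1` of the unit of `KE`. -/
noncomputable def scalarSet : Set (E.PA K) := Set.range fun k : K => k • E.unitKE K

/-- One step in the underlying undirected graph. -/
def Step (u v : E.V) : Prop :=
  (∃ e : E.Edge, E.s e = u ∧ E.r e = v) ∨ (∃ e : E.Edge, E.s e = v ∧ E.r e = u)

/-- `u ∼ v` : the vertices `u` and `v` are connected in the underlying undirected graph. -/
def Connected (u v : E.V) : Prop := Relation.ReflTransGen E.Step u v

/-- The graph `E` is connected. -/
def IsConnectedGraph : Prop := ∀ u v : E.V, E.Connected u v

/-- The graph `E` is a cycle: `n ≥ 1` vertices `u₁, …, uₙ` and `n` edges `f₁, …, fₙ` with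
`s(fᵢ) = uᵢ`, `r(fᵢ) = uᵢ₊₁` (indices mod `n`). -/
def IsCycleGraph : Prop :=
  ∃ n : ℕ, ∃ hn : 0 < n, ∃ (hv : Fin n ≃ E.V) (he : Fin n ≃ E.Edge),
    ∀ i : Fin n, E.s (he i) = hv i ∧ E.r (he i) = hv ⟨(i.1 + 1) % n, Nat.mod_lt _ hn⟩

end DirGraph

section PathAlgAux

open DirGraph Finsupp
open scoped Classical

variable {K : Type} [Field K] {E : DirGraph}

/-- The free module on (vertex, edge-list) pairs, a representation space for `PA`. -/
local notation "W" => ((E.V × List E.Edge) →₀ K)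

/-- Action of a generator on a basis pair. -/
noncomputable def genFun (g : E.Gen) (p : E.V × List E.Edge) : (E.V × List E.Edge) →₀ K :=
  match g with
  | Sum.inl u => if p.1 = u then Finsupp.single p 1 else 0
  | Sum.inr e => if p.1 = E.r e then Finsupp.single (E.s e, e :: p.2) 1 else 0

noncomputable def act (g : E.Gen) : Module.End K W :=
  Finsupp.lift _ K _ (genFun g)

lemma act_single (g : E.Gen) (p : E.V × List E.Edge) (c : K) :
    act g (Finsupp.single p c) = c • genFun g p := by
  simp [act, Finsupp.lift_apply, Finsupp.sum_single_index]

lemma act_v (u : E.V) (p : E.V × List E.Edge) (c : K) :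
    act (Sum.inl u) (Finsupp.single p c) =
      if p.1 = u then Finsupp.single p c else 0 := by
  rw [act_single]; unfold genFun; dsimp only
  split_ifs with h
  · rw [Finsupp.smul_single, smul_eq_mul, mul_one]
  · rw [smul_zero]

lemma act_e (e : E.Edge) (p : E.V × List E.Edge) (c : K) :
    act (Sum.inr e) (Finsupp.single p c) =
      if p.1 = E.r e then Finsupp.single (E.s e, e :: p.2) c else 0 := by
  rw [act_single]; unfold genFun; dsimp only
  split_ifs with h
  · rw [Finsupp.smul_single, smul_eq_mul, mul_one]
  · rw [smul_zero]

lemma rel_act : ∀ ⦃x y : FreeAlgebra K E.Gen⦄, E.PathRel K x y →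
    FreeAlgebra.lift K (act (K := K) (E := E)) x = FreeAlgebra.lift K (act (K := K) (E := E)) y := by
  intro x y h
  induction h with
  | vv_eq u =>
      simp only [map_mul, FreeAlgebra.lift_ι_apply]
      refine Finsupp.lhom_ext fun p c => ?_
      simp only [Module.End.mul_apply, act_v]
      split_ifs with h1
      · simp [act_v, h1]
      · simp
  | vv_ne u v huv =>
      simp only [map_mul, map_zero, FreeAlgebra.lift_ι_apply]
      refine Finsupp.lhom_ext fun p c => ?_
      simp only [Module.End.mul_apply, LinearMap.zero_apply, act_v]
      split_ifs with h1
      · rw [act_v, if_neg (fun hh => huv (hh.symm.trans h1))]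
      · simp
  | ve_eq e =>
      simp only [map_mul, FreeAlgebra.lift_ι_apply]
      refine Finsupp.lhom_ext fun p c => ?_
      simp only [Module.End.mul_apply, act_e]
      split_ifs with h1
      · simp [act_v]
      · simp
  | ve_ne u e hne =>
      simp only [map_mul, map_zero, FreeAlgebra.lift_ι_apply]
      refine Finsupp.lhom_ext fun p c => ?_
      simp only [Module.End.mul_apply, LinearMap.zero_apply, act_e]
      split_ifs with h1
      · rw [act_v, if_neg hne]
      · simp
  | ev_eq e =>
      simp only [map_mul, FreeAlgebra.lift_ι_apply]
      refine Finsupp.lhom_ext fun p c => ?_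
      simp only [Module.End.mul_apply, act_v, act_e]
      split_ifs with h1
      · simp [act_e, h1]
      · simp
  | ev_ne e u hne =>
      simp only [map_mul, map_zero, FreeAlgebra.lift_ι_apply]
      refine Finsupp.lhom_ext fun p c => ?_
      simp only [Module.End.mul_apply, LinearMap.zero_apply, act_v]
      split_ifs with h1
      · rw [act_e, if_neg (fun hh => hne (hh.symm.trans h1))]
      · simp

/-- The representation of the path algebra on `W`. -/
noncomputable def psi : E.PA K →ₐ[K] Module.End K W :=
  RingQuot.liftAlgHom K ⟨FreeAlgebra.lift K (act (K := K) (E := E)), rel_act⟩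

lemma psi_vtx (u : E.V) : psi (E.vtx K u) = act (Sum.inl u) := by
  rw [DirGraph.vtx, psi, RingQuot.liftAlgHom_mkAlgHom_apply, FreeAlgebra.lift_ι_apply]

lemma psi_edg (e : E.Edge) : psi (E.edg K e) = act (Sum.inr e) := by
  rw [DirGraph.edg, psi, RingQuot.liftAlgHom_mkAlgHom_apply, FreeAlgebra.lift_ι_apply]

/-! Algebraic relations in `PA`. -/

lemma vtx_mul_vtx (u v : E.V) :
    E.vtx K u * E.vtx K v = if u = v then E.vtx K u else 0 := by
  split_ifs with h
  · subst h
    have := RingQuot.mkAlgHom_rel K (DirGraph.PathRel.vv_eq (K := K) (E := E) u)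
    rw [map_mul] at this
    exact this
  · have := RingQuot.mkAlgHom_rel K (DirGraph.PathRel.vv_ne (K := K) (E := E) u v h)
    rw [map_mul, map_zero] at this
    exact this

lemma vtx_mul_edg (u : E.V) (e : E.Edge) :
    E.vtx K u * E.edg K e = if E.s e = u then E.edg K e else 0 := by
  split_ifs with h
  · subst h
    have := RingQuot.mkAlgHom_rel K (DirGraph.PathRel.ve_eq (K := K) (E := E) e)
    rw [map_mul] at this
    exact this
  · have := RingQuot.mkAlgHom_rel K (DirGraph.PathRel.ve_ne (K := K) (E := E) u e h)
    rw [map_mul, map_zero] at this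
    exact this

lemma edg_mul_vtx (e : E.Edge) (u : E.V) :
    E.edg K e * E.vtx K u = if E.r e = u then E.edg K e else 0 := by
  split_ifs with h
  · subst h
    have := RingQuot.mkAlgHom_rel K (DirGraph.PathRel.ev_eq (K := K) (E := E) e)
    rw [map_mul] at this
    exact this
  · have := RingQuot.mkAlgHom_rel K (DirGraph.PathRel.ev_ne (K := K) (E := E) e u h)
    rw [map_mul, map_zero] at this
    exact this

lemma pathElem_nil (u : E.V) : E.pathElem K u [] = E.vtx K u := by
  simp [DirGraph.pathElem]

lemma pathElem_cons (u : E.V) (e : E.Edge) (l : List E.Edge) (h : E.s e = u) :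
    E.pathElem K u (e :: l) = E.edg K e * E.pathElem K (E.r e) l := by
  unfold DirGraph.pathElem
  rw [List.map_cons, List.prod_cons, ← mul_assoc, ← mul_assoc, vtx_mul_edg, if_pos h,
    edg_mul_vtx, if_pos rfl]

lemma vtx_mul_pathElem (w u : E.V) (l : List E.Edge) :
    E.vtx K w * E.pathElem K u l = if w = u then E.pathElem K u l else 0 := by
  unfold DirGraph.pathElem
  rw [← mul_assoc, vtx_mul_vtx]
  split_ifs with h
  · subst h; rfl
  · rw [zero_mul]

lemma pathElem_mul (u v : E.V) (l : List E.Edge) (h : E.IsPathFrom u v l)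
    (u' : E.V) (l' : List E.Edge) :
    E.pathElem K u l * E.pathElem K u' l' =
      if v = u' then E.pathElem K u (l ++ l') else 0 := by
  induction l generalizing u with
  | nil =>
      have hu : u = v := h
      subst hu
      rw [pathElem_nil, List.nil_append, vtx_mul_pathElem]
      split_ifs with hh
      · subst hh; rfl
      · rfl
  | cons e l ih =>
      obtain ⟨hse, hrest⟩ := h
      rw [pathElem_cons u e l hse, mul_assoc, ih (E.r e) hrest]
      rw [List.cons_append]
      split_ifs with hvu
      · rw [← pathElem_cons u e (l ++ l') hse]
      · rw [mul_zero]

lemma pathElem_mul_vtx (u v : E.V) (l : List E.Edge) (h : E.IsPathFrom u v l) (w : E.V) :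
    E.pathElem K u l * E.vtx K w = if v = w then E.pathElem K u l else 0 := by
  have := pathElem_mul (K := K) u v l h w []
  rw [pathElem_nil, List.append_nil] at this
  exact this

lemma edg_eq_pathElem (e : E.Edge) : E.edg K e = E.pathElem K (E.s e) [e] := by
  unfold DirGraph.pathElem
  rw [List.map_singleton, List.prod_singleton, vtx_mul_edg, if_pos rfl]

lemma isPathFrom_append {u v w : E.V} {l l' : List E.Edge}
    (h : E.IsPathFrom u v l) (h' : E.IsPathFrom v w l') :
    E.IsPathFrom u w (l ++ l') := by
  induction l generalizing u with
  | nil => have : u = v := h; subst this; exact h'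
  | cons e l ih => exact ⟨h.1, ih h.2⟩

lemma psi_pathElem (u v : E.V) (l : List E.Edge) (h : E.IsPathFrom u v l)
    (w : E.V) (m : List E.Edge) (c : K) :
    psi (E.pathElem K u l) (Finsupp.single (w, m) c) =
      if w = v then Finsupp.single (u, l ++ m) c else 0 := by
  induction l generalizing u with
  | nil =>
      have hu : u = v := h
      subst hu
      rw [pathElem_nil, psi_vtx, act_v, List.nil_append]
      dsimp only
      split_ifs with hh
      · subst hh; rfl
      · rfl
  | cons e l ih =>
      obtain ⟨hse, hrest⟩ := h
      rw [pathElem_cons u e l hse, map_mul, Module.End.mul_apply, ih (E.r e) hrest]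
      split_ifs with hwv
      · rw [psi_edg, act_e, if_pos rfl, hse, List.cons_append]
      · rw [map_zero]

/-- Reconstruction map `W → PA`, sending a basis pair to the corresponding element. -/
noncomputable def theta : W →ₗ[K] E.PA K :=
  Finsupp.lift _ K _ (fun p => E.pathElem K p.1 p.2)

lemma theta_single (p : E.V × List E.Edge) (c : K) :
    theta (Finsupp.single p c) = c • E.pathElem K p.1 p.2 := by
  simp [theta, Finsupp.lift_apply, Finsupp.sum_single_index]

lemma vtx_mem_KE (u : E.V) : E.vtx K u ∈ E.KE K :=
  NonUnitalAlgebra.subset_adjoin K (Or.inl ⟨u, rfl⟩)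

lemma edg_mem_KE (e : E.Edge) : E.edg K e ∈ E.KE K :=
  NonUnitalAlgebra.subset_adjoin K (Or.inr ⟨e, rfl⟩)

/-- Every element of `KE` is a linear combination of path elements. -/
lemma KE_le_span {z : E.PA K} (hz : z ∈ E.KE K) :
    z ∈ Submodule.span K {x : E.PA K | ∃ u v l, E.IsPathFrom u v l ∧ x = E.pathElem K u l} := by
  set S : Set (E.PA K) := {x : E.PA K | ∃ u v l, E.IsPathFrom u v l ∧ x = E.pathElem K u l}
  refine NonUnitalAlgebra.adjoin_induction (fun x hx => ?_)
    (fun x y _ _ hx hy => add_mem hx hy) (zero_mem _)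
    (fun x y _ _ hx hy => ?_) (fun r x _ hx => Submodule.smul_mem _ _ hx) hz
  · rcases hx with ⟨u, rfl⟩ | ⟨e, rfl⟩
    · exact Submodule.subset_span ⟨u, u, [], rfl, (pathElem_nil u).symm⟩
    · exact Submodule.subset_span ⟨E.s e, E.r e, [e], ⟨rfl, rfl⟩, edg_eq_pathElem e⟩
  · have hle : Submodule.span K S * Submodule.span K S ≤ Submodule.span K S := by
      rw [Submodule.span_mul_span]
      refine Submodule.span_le.mpr ?_
      rintro _ ⟨a, ha, b, hb, rfl⟩
      obtain ⟨u, v, l, hl, rfl⟩ := ha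
      obtain ⟨u', v', l', hl', rfl⟩ := hb
      show E.pathElem K u l * E.pathElem K u' l' ∈ _
      rw [pathElem_mul u v l hl u' l']
      split_ifs with hvu
      · subst hvu
        exact Submodule.subset_span ⟨u, v', l ++ l', isPathFrom_append hl hl', rfl⟩
      · exact zero_mem _
    exact hle (Submodule.mul_mem_mul hx hy)

end PathAlgAux

open Finsupp in
/-- If `E` is connected and `Z(KE) ≠ 0`, then `E⁰` is finite. -/
theorem stmt2 (K : Type) [Field K] (E : DirGraph) (hconn : E.IsConnectedGraph)
    (h : ∃ z ∈ E.relCenter K, z ≠ 0) : Finite E.V := by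
  classical
  obtain ⟨z, ⟨hzKE, hzc⟩, hz0⟩ := h
  obtain ⟨n, c, g, hg⟩ := Submodule.mem_span_set'.mp (KE_le_span hzKE)
  choose u v l hpath hgeq using fun i : Fin n => (g i).2
  have hz : (∑ i, c i • E.pathElem K (u i) (l i)) = z := by
    rw [← hg]
    exact Finset.sum_congr rfl fun i _ => by rw [hgeq]
  set F : Finset E.V := Finset.image u Finset.univ with hF
  -- Outside F, left multiplication by a vertex kills z.
  have hUfin : ∀ w : E.V, w ∉ F → E.vtx K w * z = 0 := by
    intro w hw
    rw [← hz, Finset.mul_sum]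
    refine Finset.sum_eq_zero fun i _ => ?_
    rw [mul_smul_comm, vtx_mul_pathElem, if_neg, smul_zero]
    intro hwu
    exact hw (hF ▸ Finset.mem_image.mpr ⟨i, Finset.mem_univ i, hwu.symm⟩)
  -- Some vertex does not kill z.
  have hU0 : ∃ w : E.V, E.vtx K w * z ≠ 0 := by
    by_contra hall
    push_neg at hall
    apply hz0
    have h1 : (∑ w ∈ F, E.vtx K w) * z = 0 := by
      rw [Finset.sum_mul]
      exact Finset.sum_eq_zero fun w _ => hall w
    have h2 : (∑ w ∈ F, E.vtx K w) * z = z := by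
      conv_lhs => rw [← hz]
      rw [Finset.mul_sum, ← hz]
      refine Finset.sum_congr rfl fun i _ => ?_
      rw [mul_smul_comm, Finset.sum_mul]
      have he : ∀ w ∈ F, E.vtx K w * E.pathElem K (u i) (l i) =
          if w = u i then E.pathElem K (u i) (l i) else 0 :=
        fun w _ => vtx_mul_pathElem w (u i) (l i)
      rw [Finset.sum_congr rfl he, Finset.sum_ite_eq' F (u i)
        (fun _ => E.pathElem K (u i) (l i)),
        if_pos (Finset.mem_image.mpr ⟨i, Finset.mem_univ i, rfl⟩)]
    rw [← h2, h1]
  -- The diagonal property of central elements.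
  have hdiag : ∀ w : E.V, E.vtx K w * z * E.vtx K w = E.vtx K w * z := by
    intro w
    have hc := hzc (E.vtx K w) (vtx_mem_KE w)
    calc E.vtx K w * z * E.vtx K w = E.vtx K w * (z * E.vtx K w) := mul_assoc _ _ _
      _ = E.vtx K w * (E.vtx K w * z) := by rw [← hc]
      _ = E.vtx K w * E.vtx K w * z := (mul_assoc _ _ _).symm
      _ = E.vtx K w * z := by rw [vtx_mul_vtx, if_pos rfl]
  set d : E.V → Fin n → K := fun w i => if w = u i ∧ v i = w then c i else 0 with hd_def
  -- Representation of `vtx w * z` as a combination of closed paths at w.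
  have hyrep : ∀ w : E.V,
      E.vtx K w * z = ∑ i, d w i • E.pathElem K (u i) (l i) := by
    intro w
    rw [← hdiag w]
    conv_lhs => rw [← hz]
    rw [Finset.mul_sum, Finset.sum_mul]
    refine Finset.sum_congr rfl fun i _ => ?_
    rw [mul_smul_comm, smul_mul_assoc, vtx_mul_pathElem]
    simp only [hd_def]
    by_cases h1 : w = u i
    · rw [if_pos h1, pathElem_mul_vtx (u i) (v i) (l i) (hpath i)]
      by_cases h2 : v i = w
      · rw [if_pos h2, if_pos ⟨h1, h2⟩]
      · rw [if_neg h2, if_neg (by tauto), smul_zero, zero_smul]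
    · rw [if_neg h1, if_neg (by tauto), zero_mul, smul_zero, zero_smul]
  -- Action of `vtx w * z` on basis vectors.
  have hpsi_y : ∀ (w : E.V) (m : List E.Edge),
      psi (E.vtx K w * z) (Finsupp.single (w, m) (1:K)) =
        ∑ i, d w i • Finsupp.single (u i, l i ++ m) (1:K) := by
    intro w m
    rw [hyrep w, map_sum, LinearMap.sum_apply]
    refine Finset.sum_congr rfl fun i _ => ?_
    rw [map_smul, LinearMap.smul_apply, psi_pathElem (u i) (v i) (l i) (hpath i)]
    by_cases hd : w = u i ∧ v i = w
    · rw [if_pos hd.2.symm]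
    · simp only [hd_def]
      rw [if_neg hd, zero_smul, zero_smul]
  -- Reconstruction: recovering `vtx w * z` from its matrix coefficients.
  have hkey : ∀ w : E.V,
      (∑ i, d w i • Finsupp.single (u i, l i) (1:K)) = 0 → E.vtx K w * z = 0 := by
    intro w h0
    have hth : theta (K := K) (E := E) (∑ i, d w i • Finsupp.single (u i, l i) (1:K)) =
        E.vtx K w * z := by
      rw [map_sum, hyrep w]
      refine Finset.sum_congr rfl fun i _ => ?_
      rw [map_smul, theta_single, one_smul]
    rw [← hth, h0, map_zero]
  -- Closure of the support under steps.
  have hstep : ∀ w w' : E.V, E.Step w w' → E.vtx K w * z ≠ 0 → E.vtx K w' * z ≠ 0 := by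
    intro w w' hs hw hw'0
    apply hw
    rcases hs with ⟨e, hse, hre⟩ | ⟨e, hse, hre⟩
    · -- forward edge: s e = w, r e = w'
      have h1 : E.edg K e * z = 0 := by
        calc E.edg K e * z = E.edg K e * E.vtx K w' * z := by
              rw [edg_mul_vtx, if_pos hre]
          _ = E.edg K e * (E.vtx K w' * z) := mul_assoc _ _ _
          _ = 0 := by rw [hw'0, mul_zero]
      have hyz : (E.vtx K w * z) * E.edg K e = 0 := by
        calc (E.vtx K w * z) * E.edg K e = E.vtx K w * (z * E.edg K e) := mul_assoc _ _ _
          _ = E.vtx K w * (E.edg K e * z) := by rw [← hzc (E.edg K e) (edg_mem_KE e)]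
          _ = 0 := by rw [h1, mul_zero]
      have h5 : psi (E.edg K e) (Finsupp.single (w', ([] : List E.Edge)) (1:K)) =
          Finsupp.single (w, [e]) (1:K) := by
        rw [psi_edg, act_e, if_pos (show (w', ([] : List E.Edge)).1 = E.r e from hre.symm), hse]
      have h4 : (∑ i, d w i • Finsupp.single (u i, l i ++ [e]) (1:K)) = 0 := by
        rw [← hpsi_y w [e], ← h5, ← Module.End.mul_apply, ← map_mul, hyz, map_zero,
          LinearMap.zero_apply]
      have h7 := congrArg
        (Finsupp.lmapDomain K K (fun q : E.V × List E.Edge => (q.1, q.2.dropLast))) h4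
      rw [map_sum, map_zero] at h7
      apply hkey w
      rw [← h7]
      refine Finset.sum_congr rfl fun i _ => ?_
      rw [map_smul, Finsupp.lmapDomain_apply, Finsupp.mapDomain_single, List.dropLast_concat]
    · -- backward edge: s e = w', r e = w
      have hzv : z * E.vtx K w' = 0 := by
        rw [← hzc (E.vtx K w') (vtx_mem_KE w')]
        exact hw'0
      have hyz : E.edg K e * (E.vtx K w * z) = 0 := by
        calc E.edg K e * (E.vtx K w * z) = (E.edg K e * E.vtx K w) * z := (mul_assoc _ _ _).symm
          _ = E.edg K e * z := by rw [edg_mul_vtx, if_pos hre]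
          _ = z * E.edg K e := hzc (E.edg K e) (edg_mem_KE e)
          _ = z * (E.vtx K w' * E.edg K e) := by rw [vtx_mul_edg, if_pos hse]
          _ = z * E.vtx K w' * E.edg K e := (mul_assoc _ _ _).symm
          _ = 0 := by rw [hzv, zero_mul]
      have h4 : psi (E.edg K e) (∑ i, d w i • Finsupp.single (u i, l i ++ []) (1:K)) = 0 := by
        rw [← hpsi_y w [], ← Module.End.mul_apply, ← map_mul, hyz, map_zero,
          LinearMap.zero_apply]
      have h5 : (∑ i, d w i • Finsupp.single (w', e :: l i) (1:K)) = 0 := by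
        rw [← h4, map_sum]
        refine Finset.sum_congr rfl fun i _ => ?_
        by_cases hd : w = u i ∧ v i = w
        · rw [map_smul, psi_edg, act_e,
            if_pos (show (u i, l i ++ []).1 = E.r e from (hre.trans hd.1).symm), hse,
            List.append_nil]
        · simp only [hd_def]
          rw [if_neg hd, zero_smul, zero_smul, map_zero]
      have h7 := congrArg
        (Finsupp.lmapDomain K K (fun q : E.V × List E.Edge => (w, q.2.tail))) h5
      rw [map_sum, map_zero] at h7
      apply hkey w
      have h8 : (∑ i, d w i • Finsupp.single (u i, l i) (1:K)) =
          ∑ i, d w i • Finsupp.single (w, l i) (1:K) := by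
        refine Finset.sum_congr rfl fun i _ => ?_
        by_cases hd : w = u i ∧ v i = w
        · rw [← hd.1]
        · simp only [hd_def]
          rw [if_neg hd, zero_smul, zero_smul]
      rw [h8, ← h7]
      refine Finset.sum_congr rfl fun i _ => ?_
      rw [map_smul, Finsupp.lmapDomain_apply, Finsupp.mapDomain_single, List.tail_cons]
  -- Conclusion: every vertex lies in the finite set F.
  obtain ⟨w₀, hw₀⟩ := hU0
  have hall : ∀ w : E.V, E.vtx K w * z ≠ 0 := by
    intro w
    induction hconn w₀ w with
    | refl => exact hw₀
    | tail _ hbc ih => exact hstep _ _ hbc ih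
  have hsub : ∀ w : E.V, w ∈ F := fun w => by
    by_contra hwF
    exact hall w (hUfin w hwF)
  exact Set.finite_univ_iff.mp (Set.Finite.subset F.finite_toSet fun w _ => hsub w)
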